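/- Let G be a finitely generated virtually nilpotent group and T a continuous action of G on a compact metric space X. If there exists g ∈ G such that T_g is expansive and has the pseudo-orbit tracing property, then T is topologically stable. -/

import Mathlib

/-- A continuous action of a group `G` on a topological space `X`. -/
def IsContAction {G X : Type*} [Group G] [TopologicalSpace X] (T : G → X → X) : Prop :=
  (∀ g, Continuous (T g)) ∧ (∀ x, T 1 x = x) ∧ ∀ g h x, T (g * h) x = T g (T h x)

/-- `{x_g}` is a `δ` pseudo-orbit of `T` with respect to the generating set `A`. -/
def IsPseudoOrbit {G X : Type*} [Group G] [MetricSpace X] (T : G → X → X) (A : Set G)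
    (δ : ℝ) (x : G → X) : Prop :=
  ∀ a ∈ A, ∀ g : G, dist (T a (x g)) (x (a * g)) < δ

/-- The point `y` `ε`-traces the pseudo-orbit `{x_g}`. -/
def Traces {G X : Type*} [Group G] [MetricSpace X] (T : G → X → X) (ε : ℝ)
    (x : G → X) (y : X) : Prop :=
  ∀ g : G, dist (T g y) (x g) < ε

/-- `T` has the pseudo-orbit tracing property with respect to the generating set `A`. -/
def POTPWrt {G X : Type*} [Group G] [MetricSpace X] (T : G → X → X) (A : Set G) : Prop :=
  ∀ ε > (0 : ℝ), ∃ δ > (0 : ℝ), ∀ x : G → X, IsPseudoOrbit T A δ x → ∃ y : X, Traces T ε x y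

/-- `T` is `A`-topologically stable. -/
def TopStableWrt {G X : Type*} [Group G] [MetricSpace X] (T : G → X → X) (A : Set G) : Prop :=
  ∀ ε > (0 : ℝ), ∃ δ > (0 : ℝ), ∀ S : G → X → X, IsContAction S →
    (∀ a ∈ A, ∀ x : X, dist (T a x) (S a x) < δ) →
    ∃ f : X → X, Continuous f ∧ (∀ g x, T g (f x) = f (S g x)) ∧ ∀ x, dist (f x) x ≤ ε

/-- `T` is expansive with expansive constant `c`. -/
def ExpansiveWith {G X : Type*} [Group G] [MetricSpace X] (T : G → X → X) (c : ℝ) : Prop :=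
  0 < c ∧ ∀ x y : X, x ≠ y → ∃ g : G, dist (T g x) (T g y) > c

/-- The homeomorphism `T_g` is expansive (as a `ℤ`-action) with expansive constant `c`. -/
def ZExpansiveWith {G X : Type*} [Group G] [MetricSpace X] (T : G → X → X) (g : G)
    (c : ℝ) : Prop :=
  0 < c ∧ ∀ x y : X, x ≠ y → ∃ n : ℤ, dist (T (g ^ n) x) (T (g ^ n) y) > c

/-- The homeomorphism `T_g` has the classical pseudo-orbit tracing property (as a
`ℤ`-action). -/
def ZPOTP {G X : Type*} [Group G] [MetricSpace X] (T : G → X → X) (g : G) : Prop :=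
  ∀ ε > (0 : ℝ), ∃ δ > (0 : ℝ), ∀ x : ℤ → X, (∀ n : ℤ, dist (T g (x n)) (x (n + 1)) < δ) →
    ∃ y : X, ∀ n : ℤ, dist (T (g ^ n) y) (x n) < ε


open Filter Topology Subgroup
open scoped commutatorElement

/-!
A power of `g` lies in the normal core `N` of `H`, which is normal, nilpotent and of finite index,
and powers of `g` are still expansive with POTP; so we may assume `g ∈ N`. For an action `S`
uniformly close to `T`, POTP of `T_g` gives a point `f x` whose `T_g`-orbit shadows the
`S_g`-orbit of `x`, and expansiveness makes this point unique. Uniqueness makes the graph of `f`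
closed, hence `f` continuous, and shows that the elements `h` with `T_h ∘ f = f ∘ S_h` form a
subgroup containing `g`; it also contains every `h` with `T_h ∘ f` close to `S_h` for which
`h⁻¹ g h` is already in it, since then `T_{g^n} T_h f x = T_h f (S_{h⁻¹ g^n h} x)`.
For a generator `a`, the iterated commutators `c₀ = a`, `c_{i+1} = ⁅c_i⁻¹, g⁆` satisfy
`c_i⁻¹ g c_i = c_{i+1} g` and lie in the lower central series of `N`, so they reach `1`;
descending along this finite chain puts `a`, hence all of `G`, into the subgroup.
-/

theorem continuous_of_isClosed_graph {X Y : Type*} [TopologicalSpace X] [TopologicalSpace Y]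
    [CompactSpace Y] {f : X → Y} (hf : IsClosed {p : X × Y | p.2 = f p.1}) : Continuous f := by
  refine continuous_iff_continuousAt.2 fun x => tendsto_nhds_of_unique_mapClusterPt fun z hz => ?_
  have hxz : MapClusterPt (x, z) (𝓝 x) fun y => (y, f y) := by
    rw [((𝓝 x).basis_sets.prod_nhds (𝓝 z).basis_sets).mapClusterPt_iff_frequently]
    rintro ⟨s, t⟩ ⟨hs, ht⟩
    exact ((mapClusterPt_iff_frequently.1 hz t ht).and_eventually hs).mono
      fun y hy => ⟨hy.2, hy.1⟩
  exact hf.mem_of_mapClusterPt hxz (Eventually.of_forall fun _ => rfl)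

theorem exists_pos_dist_apply_lt_of_finset {ι X Y : Type*} [MetricSpace X] [CompactSpace X]
    [MetricSpace Y] {F : ι → X → Y} (hF : ∀ i, Continuous (F i)) (s : Finset ι) {ε : ℝ}
    (hε : 0 < ε) :
    ∃ μ > 0, ∀ x y, dist x y < μ → ∀ i ∈ s, dist (F i x) (F i y) < ε := by
  have : UniformEquicontinuous fun i : s => F i :=
    uniformEquicontinuous_finite.2 fun i => CompactSpace.uniformContinuous_of_continuous (hF i)
  obtain ⟨μ, hμ, hmod⟩ := Metric.uniformEquicontinuous_iff.1 this ε hε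
  exact ⟨μ, hμ, fun x y hxy i hi => hmod x y hxy ⟨i, hi⟩⟩

namespace IsContAction

variable {G X : Type*} [Group G] [TopologicalSpace X] {T : G → X → X}

theorem one_apply (hT : IsContAction T) (x : X) : T 1 x = x := hT.2.1 x

theorem mul_apply (hT : IsContAction T) (g h : G) (x : X) : T (g * h) x = T g (T h x) :=
  hT.2.2 g h x

theorem inv_apply_apply (hT : IsContAction T) (g : G) (x : X) : T g⁻¹ (T g x) = x := by
  rw [← hT.mul_apply, inv_mul_cancel, hT.one_apply]

theorem apply_inv_apply (hT : IsContAction T) (g : G) (x : X) : T g (T g⁻¹ x) = x := by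
  rw [← hT.mul_apply, mul_inv_cancel, hT.one_apply]

end IsContAction

section Perturbation

variable {G X : Type*} [MetricSpace X] {T S : G → X → X}

def UniformlyCloseOn (T S : G → X → X) (F : Set G) (δ : ℝ) : Prop :=
  ∀ h ∈ F, ∀ x, dist (T h x) (S h x) < δ

theorem UniformlyCloseOn.mono {F F' : Set G} {δ δ' : ℝ} (hclose : UniformlyCloseOn T S F δ)
    (hF : F' ⊆ F) (hδ : δ ≤ δ') : UniformlyCloseOn T S F' δ' :=
  fun h hh x => (hclose h (hF hh) x).trans_le hδ

variable [Group G] [CompactSpace X]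

theorem exists_forall_dist_lt_of_mem_closure (hT : IsContAction T) {A : Set G} {h : G}
    (hh : h ∈ closure A) {η : ℝ} (hη : 0 < η) :
    ∃ δ > 0, ∀ S, IsContAction S → UniformlyCloseOn T S A δ →
      ∀ x, dist (T h x) (S h x) < η := by
  induction hh using closure_induction generalizing η with
  | mem a ha => exact ⟨η, hη, fun S _ hclose => hclose a ha⟩
  | one =>
    refine ⟨1, one_pos, fun S hS _ x => ?_⟩
    rw [hT.one_apply, hS.one_apply, dist_self]
    exact hη
  | mul a b _ _ iha ihb =>
    obtain ⟨μ, hμ, hTa⟩ := Metric.uniformContinuous_iff.1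
      (CompactSpace.uniformContinuous_of_continuous (hT.1 a)) (η / 2) (half_pos hη)
    obtain ⟨δa, hδa, ha⟩ := iha (half_pos hη)
    obtain ⟨δb, hδb, hb⟩ := ihb hμ
    refine ⟨min δa δb, lt_min hδa hδb, fun S hS hclose x => ?_⟩
    rw [hT.mul_apply, hS.mul_apply]
    calc dist (T a (T b x)) (S a (S b x))
        ≤ dist (T a (T b x)) (T a (S b x)) + dist (T a (S b x)) (S a (S b x)) :=
          dist_triangle _ _ _
      _ < η / 2 + η / 2 := by
          gcongr
          · exact hTa (hb S hS (hclose.mono subset_rfl (min_le_right _ _)) x)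
          · exact ha S hS (hclose.mono subset_rfl (min_le_left _ _)) (S b x)
      _ = η := add_halves η
  | inv a _ iha =>
    obtain ⟨μ, hμ, hTa⟩ := Metric.uniformContinuous_iff.1
      (CompactSpace.uniformContinuous_of_continuous (hT.1 a⁻¹)) η hη
    obtain ⟨δ, hδ, ha⟩ := iha hμ
    refine ⟨δ, hδ, fun S hS hclose x => ?_⟩
    -- compare `T a⁻¹` at `x = S a y` and at `T a y`, where `y = S a⁻¹ x`
    have := hTa (ha S hS hclose (S a⁻¹ x))
    rwa [hS.apply_inv_apply, hT.inv_apply_apply, dist_comm] at this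

theorem exists_uniformlyCloseOn_finset (hT : IsContAction T) {A : Set G} (hA : closure A = ⊤)
    (F : Finset G) {η : ℝ} (hη : 0 < η) :
    ∃ δ > 0, ∀ S, IsContAction S → UniformlyCloseOn T S A δ →
      UniformlyCloseOn T S F η := by
  classical
  induction F using Finset.induction_on with
  | empty => exact ⟨1, one_pos, fun _ _ _ h hh => absurd hh (Finset.notMem_empty h)⟩
  | insert h F _ ih =>
    obtain ⟨δ, hδ, hF⟩ := ih
    obtain ⟨δh, hδh, hh⟩ := exists_forall_dist_lt_of_mem_closure hT (hA ▸ mem_top h) hη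
    refine ⟨min δh δ, lt_min hδh hδ, fun S hS hclose => ?_⟩
    rw [Finset.coe_insert]
    rintro k (rfl | hk)
    · exact hh S hS (hclose.mono subset_rfl (min_le_left _ _))
    · exact hF S hS (hclose.mono subset_rfl (min_le_right _ _)) k hk

end Perturbation

section Powers

variable {G X : Type*} [Group G] [MetricSpace X] {T : G → X → X} {g : G}

theorem ZExpansiveWith.pow [CompactSpace X] (hT : IsContAction T) {c : ℝ}
    (hexp : ZExpansiveWith T g c) {m : ℕ} (hm : 0 < m) : ∃ c', ZExpansiveWith T (g ^ m) c' := by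
  classical
  -- `c'` is half a common modulus of uniform continuity of the `T_{g^r}`, `r < m`, for `c`
  obtain ⟨μ, hμ, hmod⟩ :=
    exists_pos_dist_apply_lt_of_finset hT.1 ((Finset.range m).image (g ^ ·)) hexp.1
  refine ⟨μ / 2, half_pos hμ, fun x y hxy => ?_⟩
  by_contra! hsmall
  obtain ⟨n, hn⟩ := hexp.2 x y hxy
  have hm' : (0 : ℤ) < m := by exact_mod_cast hm
  have hr : n % m = ((n % m).toNat : ℤ) :=
    (Int.toNat_of_nonneg (Int.emod_nonneg n hm'.ne')).symm
  have hsplit : g ^ n = g ^ (n % m).toNat * (g ^ m) ^ (n / m) := by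
    rw [← zpow_natCast, ← hr, ← zpow_natCast, ← zpow_mul, ← zpow_add,
      Int.emod_add_mul_ediv]
  have hrm : (n % m).toNat < m := by have := Int.emod_lt_of_pos n hm'; omega
  have := hmod _ _ ((hsmall (n / m)).trans_lt (half_lt_self hμ)) _
    (Finset.mem_image_of_mem _ (Finset.mem_range.2 hrm))
  rw [← hT.mul_apply, ← hT.mul_apply, ← hsplit] at this
  exact lt_asymm hn this

theorem ZPOTP.pow (hT : IsContAction T) (hpotp : ZPOTP T g) {m : ℕ} (hm : 0 < m) :
    ZPOTP T (g ^ m) := by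
  intro ε hε
  obtain ⟨δ, hδ, htrace⟩ := hpotp ε hε
  refine ⟨δ, hδ, fun y hy => ?_⟩
  -- interpolate the `g ^ m`-pseudo-orbit `y` by the `g`-pseudo-orbit `x (m q + r) = T_{g^r} (y q)`
  let x : ℤ → X := fun n => T (g ^ (n % m).toNat) (y (n / m))
  have hm' : (0 : ℤ) < m := by exact_mod_cast hm
  have hx : ∀ q : ℤ, ∀ r < m, x (m * q + r) = T (g ^ r) (y q) := by
    intro q r hr
    have hdiv : (m * q + r) / m = q ∧ (m * q + r) % m = r :=
      (Int.ediv_emod_unique hm').2 ⟨by ring, by positivity, by exact_mod_cast hr⟩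
    simp only [x, hdiv, Int.toNat_natCast]
  have hpo : ∀ n, dist (T g (x n)) (x (n + 1)) < δ := by
    intro n
    obtain ⟨q, r, hr, rfl⟩ : ∃ q : ℤ, ∃ r < m, n = m * q + r := by
      have := Int.emod_add_mul_ediv n m
      have := Int.emod_nonneg n hm'.ne'
      have := Int.emod_lt_of_pos n hm'
      exact ⟨n / m, (n % m).toNat, by omega, by omega⟩
    rw [hx q r hr, ← hT.mul_apply, ← pow_succ']
    rcases Nat.lt_or_ge (r + 1) m with hlt | hge
    · rw [add_assoc, ← Nat.cast_succ, hx q _ hlt, dist_self]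
      exact hδ
    · obtain rfl : r + 1 = m := by omega
      have hnext : (↑(r + 1) : ℤ) * q + r + 1 = ↑(r + 1) * (q + 1) + (0 : ℕ) := by
        push_cast
        ring
      rw [hnext, hx _ 0 hm, pow_zero, hT.one_apply]
      exact hy q
  obtain ⟨z, hz⟩ := htrace x hpo
  refine ⟨z, fun q => ?_⟩
  have := hz (m * q + (0 : ℕ))
  rwa [hx q 0 hm, pow_zero, hT.one_apply, Nat.cast_zero, add_zero, zpow_mul, zpow_natCast] at this

theorem ZPOTP.exists_shadowing (hpotp : ZPOTP T g) {ε : ℝ} (hε : 0 < ε) :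
    ∃ δ > 0, ∀ S, IsContAction S → (∀ x, dist (T g x) (S g x) < δ) →
      ∃ f : X → X, ∀ x (n : ℤ), dist (T (g ^ n) (f x)) (S (g ^ n) x) < ε := by
  obtain ⟨δ, hδ, htrace⟩ := hpotp ε hε
  refine ⟨δ, hδ, fun S hS hclose => ?_⟩
  choose f hf using fun x => htrace (fun n => S (g ^ n) x) fun n => by
    rw [add_comm, zpow_one_add, hS.mul_apply]
    exact hclose _
  exact ⟨f, hf⟩

end Powers

section Intertwining

variable {G X : Type*} [Group G] [MetricSpace X] {T S : G → X → X}

def intertwiningSubgroup (hT : IsContAction T) (hS : IsContAction S) (f : X → X) :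
    Subgroup G where
  carrier := {h | ∀ x, T h (f x) = f (S h x)}
  one_mem' x := by rw [hT.one_apply, hS.one_apply]
  mul_mem' {a b} ha hb x := by rw [hT.mul_apply, hb, ha, hS.mul_apply]
  inv_mem' {a} ha x := by
    conv_lhs => rw [← hS.apply_inv_apply a x, ← ha, hT.inv_apply_apply]

theorem mem_intertwiningSubgroup {hT : IsContAction T} {hS : IsContAction S} {f : X → X}
    {h : G} : h ∈ intertwiningSubgroup hT hS f ↔ ∀ x, T h (f x) = f (S h x) :=
  Iff.rfl

variable {g : G} {c : ℝ} {f : X → X}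

theorem ZExpansiveWith.eq_of_forall_dist_le (hexp : ZExpansiveWith T g c)
    (hf : ∀ x (n : ℤ), dist (T (g ^ n) (f x)) (S (g ^ n) x) ≤ c / 2) {x y : X}
    (hy : ∀ n : ℤ, dist (T (g ^ n) y) (S (g ^ n) x) ≤ c / 2) : y = f x := by
  by_contra hne
  obtain ⟨n, hn⟩ := hexp.2 y (f x) hne
  linarith [hy n, hf x n, dist_triangle_right (T (g ^ n) y) (T (g ^ n) (f x)) (S (g ^ n) x)]

theorem ZExpansiveWith.self_mem_intertwiningSubgroup (hT : IsContAction T)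
    (hS : IsContAction S) (hexp : ZExpansiveWith T g c)
    (hf : ∀ x (n : ℤ), dist (T (g ^ n) (f x)) (S (g ^ n) x) ≤ c / 2) :
    g ∈ intertwiningSubgroup hT hS f := fun x => hexp.eq_of_forall_dist_le hf fun n => by
  rw [← hT.mul_apply, ← hS.mul_apply, ← zpow_add_one]
  exact hf x (n + 1)

theorem ZExpansiveWith.mem_intertwiningSubgroup_of_conj_mem (hT : IsContAction T)
    (hS : IsContAction S) (hexp : ZExpansiveWith T g c)
    (hf : ∀ x (n : ℤ), dist (T (g ^ n) (f x)) (S (g ^ n) x) ≤ c / 2) {h : G}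
    (hh : ∀ y, dist (T h (f y)) (S h y) ≤ c / 2)
    (hconj : h⁻¹ * g * h ∈ intertwiningSubgroup hT hS f) :
    h ∈ intertwiningSubgroup hT hS f := by
  intro x
  refine hexp.eq_of_forall_dist_le hf fun n => ?_
  have hw := zpow_mem hconj n
  have hcomm : g ^ n * h = h * (h⁻¹ * g * h) ^ n := by
    have hconj_pow : (h⁻¹ * g * h) ^ n = h⁻¹ * g ^ n * h := by
      simpa using conj_zpow (a := h⁻¹) (b := g) (i := n)
    rw [hconj_pow]
    group
  calc dist (T (g ^ n) (T h (f x))) (S (g ^ n) (S h x))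
      = dist (T h (f (S ((h⁻¹ * g * h) ^ n) x))) (S h (S ((h⁻¹ * g * h) ^ n) x)) := by
        rw [← hT.mul_apply, ← hS.mul_apply, hcomm, hT.mul_apply, hS.mul_apply, hw]
    _ ≤ c / 2 := hh _

theorem ZExpansiveWith.continuous_of_forall_dist_le [CompactSpace X] (hT : IsContAction T)
    (hS : IsContAction S) (hexp : ZExpansiveWith T g c)
    (hf : ∀ x (n : ℤ), dist (T (g ^ n) (f x)) (S (g ^ n) x) ≤ c / 2) : Continuous f := by
  have hgraph : {p : X × X | p.2 = f p.1} =
      ⋂ n : ℤ, {p | dist (T (g ^ n) p.2) (S (g ^ n) p.1) ≤ c / 2} := by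
    ext ⟨x, y⟩
    simp only [Set.mem_ofPred_eq, Set.mem_iInter]
    exact ⟨fun h n => h ▸ hf x n, hexp.eq_of_forall_dist_le hf⟩
  refine continuous_of_isClosed_graph
    (hgraph ▸ isClosed_iInter fun n => isClosed_le ?_ continuous_const)
  exact ((hT.1 _).comp continuous_snd).dist ((hS.1 _).comp continuous_fst)

end Intertwining

section CommutatorChain

variable {G : Type*} [Group G]

def commChain (g a : G) : ℕ → G
  | 0 => a
  | i + 1 => ⁅(commChain g a i)⁻¹, g⁆

theorem commChain_succ_mul (g a : G) (i : ℕ) :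
    commChain g a (i + 1) * g = (commChain g a i)⁻¹ * g * commChain g a i := by
  simp only [commChain, commutatorElement_def, inv_inv, inv_mul_cancel_right]

theorem commChain_succ' (g a : G) (i : ℕ) :
    commChain g a (i + 1) = commChain g (commChain g a 1) i := by
  induction i with
  | zero => rfl
  | succ i ih => exact congrArg (⁅·⁻¹, g⁆) ih

theorem commChain_mem_lowerCentralSeries {S : Subgroup G} {g a : G} (hg : g ∈ S) (ha : a ∈ S)
    (i : ℕ) : commChain g a i ∈ S.lowerCentralSeries i := by
  induction i with
  | zero => exact ha
  | succ i ih => exact commutator_mem_commutator (inv_mem ih) hg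

theorem commChain_one_mem {N : Subgroup G} [hN : N.Normal] {g : G} (hg : g ∈ N) (a : G) :
    commChain g a 1 ∈ N :=
  mul_mem (hN.conj_mem g hg a⁻¹) (inv_mem hg)

theorem commChain_eq_one {N : Subgroup G} [N.Normal] {n : ℕ} (hN : N.lowerCentralSeries n = ⊥)
    {g : G} (hg : g ∈ N) (a : G) : commChain g a (n + 1) = 1 := by
  rw [commChain_succ', ← Subgroup.mem_bot, ← hN]
  exact commChain_mem_lowerCentralSeries hg (commChain_one_mem hg a) n

theorem mem_of_commChain {K : Subgroup G} {g a : G} {n : ℕ} (hg : g ∈ K)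
    (hn : commChain g a n ∈ K)
    (hstep : ∀ i < n,
      (commChain g a i)⁻¹ * g * commChain g a i ∈ K → commChain g a i ∈ K) :
    a ∈ K :=
  Nat.decreasingInduction (motive := fun i _ => commChain g a i ∈ K)
    (fun i hi hsucc => hstep i hi (commChain_succ_mul g a i ▸ mul_mem hsucc hg)) hn
    (Nat.zero_le n)

end CommutatorChain

section Stability

variable {G X : Type*} [Group G] [MetricSpace X] {T S : G → X → X} {g : G} {c : ℝ}
  {f : X → X}

theorem ZExpansiveWith.intertwiningSubgroup_eq_top (hT : IsContAction T) (hS : IsContAction S)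
    (hexp : ZExpansiveWith T g c)
    (hf : ∀ x (n : ℤ), dist (T (g ^ n) (f x)) (S (g ^ n) x) ≤ c / 2)
    {N : Subgroup G} [N.Normal] {n : ℕ} (hN : N.lowerCentralSeries n = ⊥) (hgN : g ∈ N)
    {A : Set G} (hA : closure A = ⊤)
    (hchain : ∀ a ∈ A, ∀ i ≤ n, ∀ y,
      dist (T (commChain g a i) (f y)) (S (commChain g a i) y) ≤ c / 2) :
    intertwiningSubgroup hT hS f = ⊤ := by
  rw [eq_top_iff, ← hA, closure_le]
  intro a ha
  refine mem_of_commChain (hexp.self_mem_intertwiningSubgroup hT hS hf)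
    (by rw [commChain_eq_one hN hgN]; exact one_mem _) fun i hi => ?_
  exact hexp.mem_intertwiningSubgroup_of_conj_mem hT hS hf (hchain a ha i (Nat.le_of_lt_succ hi))

theorem topStableWrt_of_mem_of_isNilpotent [CompactSpace X] {N : Subgroup G} [N.Normal]
    (hN : Group.IsNilpotent N) {A : Finset G} (hA : closure (A : Set G) = ⊤)
    (hT : IsContAction T) (hgN : g ∈ N) (hexp : ZExpansiveWith T g c) (hpotp : ZPOTP T g) :
    TopStableWrt T A := by
  classical
  obtain ⟨n, hn⟩ := (isNilpotent_iff_lowerCentralSeries N).1 hN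
  intro ε hε
  have hc := hexp.1
  let D := A.biUnion fun a => (Finset.range (n + 1)).image (commChain g a)
  obtain ⟨μ, hμ, hTD⟩ := exists_pos_dist_apply_lt_of_finset hT.1 D (by positivity : 0 < c / 4)
  set ε₁ := min ε (min (c / 2) μ)
  obtain ⟨δ₁, hδ₁, hshadow⟩ :=
    hpotp.exists_shadowing (lt_min hε (lt_min (half_pos hc) hμ))
  obtain ⟨δ, hδ, hclose⟩ :=
    exists_uniformlyCloseOn_finset hT hA (insert g D) (lt_min hδ₁ (by positivity : 0 < c / 4))
  refine ⟨δ, hδ, fun S hS hSA => ?_⟩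
  have hSD := hclose S hS hSA
  obtain ⟨f, hf⟩ := hshadow S hS fun x =>
    (hSD g (Finset.mem_insert_self g D) x).trans_le (min_le_left _ _)
  have hfx : ∀ x, dist (f x) x < ε₁ := fun x => by
    simpa only [zpow_zero, hT.one_apply, hS.one_apply] using hf x 0
  have hf' : ∀ x (n : ℤ), dist (T (g ^ n) (f x)) (S (g ^ n) x) ≤ c / 2 := fun x n =>
    (hf x n).le.trans ((min_le_right _ _).trans (min_le_left _ _))
  have hchain : ∀ a ∈ (A : Set G), ∀ i ≤ n, ∀ y,
      dist (T (commChain g a i) (f y)) (S (commChain g a i) y) ≤ c / 2 := by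
    intro a ha i hi y
    have hiD : commChain g a i ∈ D := Finset.mem_biUnion.2
      ⟨a, ha, Finset.mem_image_of_mem _ (Finset.mem_range.2 (Nat.lt_succ_of_le hi))⟩
    have hT_near :=
      hTD _ _ ((hfx y).trans_le ((min_le_right _ _).trans (min_le_right _ _))) _ hiD
    have hS_near := (hSD _ (Finset.mem_insert_of_mem hiD) y).trans_le (min_le_right _ _)
    linarith [dist_triangle (T (commChain g a i) (f y)) (T (commChain g a i) y)
      (S (commChain g a i) y)]
  have htop := hexp.intertwiningSubgroup_eq_top hT hS hf' hn hgN hA hchain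
  exact ⟨f, hexp.continuous_of_forall_dist_le hT hS hf',
    fun h => mem_intertwiningSubgroup.1 (htop ▸ mem_top h),
    fun x => (hfx x).le.trans (min_le_left _ _)⟩

end Stability

/-- If `G` is a finitely generated virtually nilpotent group and some `T_g` is expansive and
has POTP, then the `G`-action `T` is topologically stable. -/
theorem topStable_of_virtually_nilpotent_of_element_expansive_potp
    {G X : Type*} [Group G] [MetricSpace X] [CompactSpace X]
    (H : Subgroup G) (hHnil : Group.IsNilpotent H) (hHfin : H.FiniteIndex)
    (A : Finset G) (hAgen : Subgroup.closure (A : Set G) = ⊤)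
    (T : G → X → X) (hT : IsContAction T)
    (g : G) (c : ℝ) (hexp : ZExpansiveWith T g c) (hpotp : ZPOTP T g) :
    TopStableWrt T (A : Set G) := by
  have hcore : Group.IsNilpotent H.normalCore :=
    Group.nilpotent_of_mulEquiv (Subgroup.subgroupOfEquivOfLe H.normalCore_le)
  obtain ⟨m, hm, -, hgm⟩ :=
    H.normalCore.exists_pow_mem_of_index_ne_zero (finiteIndex_normalCore H).index_ne_zero g
  obtain ⟨c', hexp'⟩ := hexp.pow hT hm
  exact topStableWrt_of_mem_of_isNilpotent hcore hAgen hT hgm hexp' (hpotp.pow hT hm)
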